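/- Let χ be a complete simple game on n voters whose desirability preorder ⊒ has exactly two equivalence classes of voters. Then μ(χ) ≤ √n + 1; that is, χ is (√n + 1)-roughly weighted. -/

import Mathlib

open Finset

/-- `f` is `α`-roughly weighted: there are real weights such that every winning
coalition has weight at least `1` and every losing coalition weight at most `α`. -/
def RoughlyWeighted {n : ℕ} (f : Finset (Fin n) → Bool) (α : ℝ) : Prop :=
  ∃ w : Fin n → ℝ,
    (∀ S : Finset (Fin n), f S = true → 1 ≤ ∑ i ∈ S, w i) ∧
    (∀ S : Finset (Fin n), f S = false → ∑ i ∈ S, w i ≤ α)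

/-- The critical threshold value `μ(f)`: the smallest `α ≥ 1` such that `f` is
`α`-roughly weighted. -/
noncomputable def mu {n : ℕ} (f : Finset (Fin n) → Bool) : ℝ :=
  sInf {α : ℝ | 1 ≤ α ∧ RoughlyWeighted f α}

/-- A simple game: monotone, the empty coalition loses and the grand coalition wins. -/
def SimpleGame {n : ℕ} (χ : Finset (Fin n) → Bool) : Prop :=
  χ ∅ = false ∧ χ Finset.univ = true ∧
    ∀ S T : Finset (Fin n), S ⊆ T → χ S = true → χ T = true

/-- Isbell's desirability relation: `i ⊒ j` iff replacing `j` by `i` in any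
coalition containing `j` but not `i` preserves winning. -/
def Desirable {n : ℕ} (χ : Finset (Fin n) → Bool) (i j : Fin n) : Prop :=
  ∀ S : Finset (Fin n), j ∈ S → i ∉ S →
    χ S = true → χ (insert i (S.erase j)) = true

/-- `i □ j`: the voters `i` and `j` are equally desirable. -/
def EquivVoters {n : ℕ} (χ : Finset (Fin n) → Bool) (i j : Fin n) : Prop :=
  Desirable χ i j ∧ Desirable χ j i

/-!
Let `A` be the class of voters at least as desirable as everyone; with only two classes, every
voter is at least as desirable as every voter outside `A`. Give weight `√n + 1` to the voters
of `A` and `1` to the others, and let `T` be a winning coalition of minimal weight `φ`. If `S`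
has at least as many voters as `T`, and at least as many from `A`, then `T` can be moved into `S`
by exchanging one voter at a time for an at least as desirable one, so `S` wins. Hence a losing
coalition has fewer voters than `T` or fewer voters from `A`; in both cases its weight is at most
`(√n + 1) φ`, using `|S| ≤ n` in the second.
-/

theorem RoughlyWeighted.of_scaled {n : ℕ} {f : Finset (Fin n) → Bool} {α c : ℝ}
    (v : Fin n → ℝ) (hc : 0 < c) (hwin : ∀ S, f S = true → c ≤ ∑ i ∈ S, v i)
    (hlose : ∀ S, f S = false → ∑ i ∈ S, v i ≤ α * c) : RoughlyWeighted f α := by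
  refine ⟨fun i => v i / c, fun S hS => ?_, fun S hS => ?_⟩
  · rw [← sum_div, le_div_iff₀ hc, one_mul]
    exact hwin S hS
  · rw [← sum_div, div_le_iff₀ hc]
    exact hlose S hS

theorem mu_le_of_roughlyWeighted {n : ℕ} {f : Finset (Fin n) → Bool} {α : ℝ} (hα : 1 ≤ α)
    (h : RoughlyWeighted f α) : mu f ≤ α :=
  csInf_le ⟨1, fun _ hβ => hβ.1⟩ ⟨hα, h⟩

section Exchange

variable {α : Type*} [DecidableEq α] {A S T : Finset α} {x y : α}

theorem card_insert_erase_of_mem_of_notMem (hx : x ∈ T) (hy : y ∉ T) :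
    #(insert y (T.erase x)) = #T := by
  rw [card_insert_of_notMem fun h => hy (mem_of_mem_erase h), card_erase_add_one hx]

theorem card_insert_erase_sdiff_add_one (hx : x ∈ T) (hxS : x ∉ S) (hy : y ∈ S) :
    #(insert y (T.erase x) \ S) + 1 = #(T \ S) := by
  rw [insert_sdiff_of_mem _ hy, erase_sdiff_comm, card_erase_add_one (mem_sdiff.2 ⟨hx, hxS⟩)]

theorem exists_exchange_of_card_le (hTS : ¬T ⊆ S) (hcard : #T ≤ #S)
    (hA : #(T ∩ A) ≤ #(S ∩ A)) :
    ∃ x ∈ T, x ∉ S ∧ ∃ y ∈ S, y ∉ T ∧ (x ∈ A → y ∈ A) ∧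
      #(insert y (T.erase x) ∩ A) ≤ #(S ∩ A) := by
  by_cases hTA : ∃ x ∈ T, x ∉ S ∧ x ∈ A
  · obtain ⟨x, hxT, hxS, hxA⟩ := hTA
    have hxTA : x ∈ T ∩ A := mem_inter.2 ⟨hxT, hxA⟩
    obtain ⟨y, hyS, hyA, hyT⟩ : ∃ y ∈ S, y ∈ A ∧ y ∉ T := by
      by_contra! h
      have hsub : S ∩ A ⊆ (T ∩ A).erase x := fun z hz => by
        obtain ⟨hzS, hzA⟩ := mem_inter.1 hz
        exact mem_erase.2 ⟨by rintro rfl; exact hxS hzS, mem_inter.2 ⟨h z hzS hzA, hzA⟩⟩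
      have := card_le_card hsub
      rw [card_erase_of_mem hxTA] at this
      have := card_pos.2 ⟨x, hxTA⟩
      omega
    refine ⟨x, hxT, hxS, y, hyS, hyT, fun _ => hyA, ?_⟩
    calc #(insert y (T.erase x) ∩ A) ≤ #(insert y ((T ∩ A).erase x)) :=
          card_le_card fun z => by simp only [mem_inter, mem_insert, mem_erase]; tauto
      _ ≤ #((T ∩ A).erase x) + 1 := card_insert_le _ _
      _ = #(T ∩ A) := card_erase_add_one hxTA
      _ ≤ #(S ∩ A) := hA
  · push Not at hTA
    obtain ⟨x, hxT, hxS⟩ := not_subset.1 hTS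
    obtain ⟨y, hyS, hyT⟩ : ∃ y ∈ S, y ∉ T := by
      by_contra! h
      exact hTS (eq_of_subset_of_card_le h hcard ▸ subset_rfl)
    refine ⟨x, hxT, hxS, y, hyS, hyT, fun hxA => absurd hxA (hTA x hxT hxS), ?_⟩
    refine card_le_card fun z => ?_
    simp only [mem_inter, mem_insert, mem_erase]
    rintro ⟨rfl | ⟨-, hzT⟩, hzA⟩
    · exact ⟨hyS, hzA⟩
    · exact ⟨by_contra fun hzS => hTA z hzT hzS hzA, hzA⟩

end Exchange

section Potential

variable {α : Type*} [DecidableEq α] {K : ℝ} {A S T : Finset α}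

def potential (K : ℝ) (A S : Finset α) : ℝ := K * #(S ∩ A) + #S

theorem sum_ite_mem_eq_potential (K : ℝ) (A S : Finset α) :
    ∑ i ∈ S, (if i ∈ A then K + 1 else 1) = potential K A S := by
  rw [sum_ite, sum_const, sum_const, nsmul_eq_mul, nsmul_eq_mul, potential,
    ← card_filter_add_card_filter_not (s := S) (· ∈ A), filter_mem_eq_inter, Nat.cast_add]
  ring

theorem potential_pos (hK : 0 ≤ K) (hT : T.Nonempty) : 0 < potential K A T := by
  have : (0 : ℝ) < #T := by exact_mod_cast hT.card_pos
  unfold potential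
  positivity

theorem potential_le_of_lt (hK : 0 ≤ K) (hS : (#S : ℝ) ≤ K ^ 2) (hT : T.Nonempty)
    (h : #S < #T ∨ #(S ∩ A) < #(T ∩ A)) : potential K A S ≤ (K + 1) * potential K A T := by
  have hSA : (#(S ∩ A) : ℝ) ≤ #S := by exact_mod_cast card_le_card inter_subset_left
  have hTA : (#(T ∩ A) : ℝ) ≤ #T := by exact_mod_cast card_le_card inter_subset_left
  have hT1 : (1 : ℝ) ≤ #T := by exact_mod_cast hT.card_pos
  unfold potential
  rcases h with h | h
  · have : (#S : ℝ) + 1 ≤ #T := by exact_mod_cast h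
    nlinarith
  · have : (#(S ∩ A) : ℝ) + 1 ≤ #(T ∩ A) := by exact_mod_cast h
    nlinarith

end Potential

section Game

variable {n : ℕ} {χ : Finset (Fin n) → Bool}

theorem Desirable.trans {i j k : Fin n} (hij : Desirable χ i j) (hjk : Desirable χ j k) :
    Desirable χ i k := by
  intro S hkS hiS hS
  rcases eq_or_ne i j with rfl | hij'
  · exact hjk S hkS hiS hS
  rcases eq_or_ne j k with rfl | hjk'
  · exact hij S hkS hiS hS
  by_cases hjS : j ∈ S
  · have h := hjk _ (by grind) (by grind) (hij S hjS hiS hS)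
    rwa [show insert j ((insert i (S.erase j)).erase k) = insert i (S.erase k) by grind] at h
  · have h := hij _ (mem_insert_self _ _) (by grind) (hjk S hkS hjS hS)
    rwa [show insert i ((insert j (S.erase k)).erase j) = insert i (S.erase k) by grind] at h

open Classical in
noncomputable def topClass (χ : Finset (Fin n) → Bool) : Finset (Fin n) :=
  univ.filter fun i => ∀ j, Desirable χ i j

theorem mem_topClass {i : Fin n} : i ∈ topClass χ ↔ ∀ j, Desirable χ i j := by
  simp [topClass]

theorem desirable_of_notMem_topClass
    (hcomplete : ∀ i j : Fin n, Desirable χ i j ∨ Desirable χ j i)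
    (hatmosttwo : ∀ i j k : Fin n,
      EquivVoters χ i j ∨ EquivVoters χ j k ∨ EquivVoters χ i k)
    {x : Fin n} (hx : x ∉ topClass χ) (y : Fin n) : Desirable χ y x := by
  by_contra hyx
  have hxy : Desirable χ x y := (hcomplete y x).resolve_left hyx
  refine hx (mem_topClass.2 fun m => ?_)
  rcases hatmosttwo y x m with h | h | h
  · exact absurd h.1 hyx
  · exact h.1
  · exact hxy.trans h.1

section Dominance

variable (A : Finset (Fin n))
  (hTop : ∀ i ∈ A, ∀ j, Desirable χ i j) (hBot : ∀ x ∉ A, ∀ y, Desirable χ y x)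
include hTop hBot

theorem winning_of_card_le
    (hmono : ∀ S T : Finset (Fin n), S ⊆ T → χ S = true → χ T = true)
    {S T : Finset (Fin n)} (hT : χ T = true) (hcard : #T ≤ #S) (hA : #(T ∩ A) ≤ #(S ∩ A)) :
    χ S = true := by
  induction h : #(T \ S) generalizing T with
  | zero => exact hmono T S (sdiff_eq_empty_iff_subset.1 (card_eq_zero.1 h)) hT
  | succ d ih =>
    have hTS : ¬T ⊆ S := fun hsub => by simp [sdiff_eq_empty_iff_subset.2 hsub] at h
    obtain ⟨x, hxT, hxS, y, hyS, hyT, hxy, hA'⟩ := exists_exchange_of_card_le hTS hcard hA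
    have hyx : Desirable χ y x := if hxA : x ∈ A then hTop y (hxy hxA) x else hBot x hxA y
    refine ih (hyx T hxT hyT hT) ?_ hA' ?_
    · rwa [card_insert_erase_of_mem_of_notMem hxT hyT]
    · have := card_insert_erase_sdiff_add_one hxT hxS hyS
      omega

theorem SimpleGame.roughlyWeighted_of_top_bottom (hχ : SimpleGame χ) :
    RoughlyWeighted χ (Real.sqrt n + 1) := by
  obtain ⟨hempty, huniv, hmono⟩ := hχ
  have hK : 0 ≤ Real.sqrt n := Real.sqrt_nonneg n
  obtain ⟨T, hT, hTmin⟩ := exists_min_image (univ.filter fun S => χ S = true)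
    (potential (Real.sqrt n) A) ⟨univ, by simp [huniv]⟩
  replace hT : χ T = true := (mem_filter.1 hT).2
  have hTne : T.Nonempty := nonempty_iff_ne_empty.2 (by rintro rfl; simp [hempty] at hT)
  refine RoughlyWeighted.of_scaled (fun i => if i ∈ A then Real.sqrt n + 1 else 1)
    (potential_pos (A := A) hK hTne) (fun S hS => ?_) (fun S hS => ?_)
  · rw [sum_ite_mem_eq_potential]
    exact hTmin S (mem_filter.2 ⟨mem_univ S, hS⟩)
  · rw [sum_ite_mem_eq_potential]
    refine potential_le_of_lt hK ?_ hTne ?_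
    · rw [Real.sq_sqrt (Nat.cast_nonneg n)]
      exact_mod_cast (card_le_univ S).trans_eq (Fintype.card_fin n)
    · by_contra! h
      simpa [hS] using winning_of_card_le A hTop hBot hmono hT h.1 h.2

end Dominance

end Game

theorem complete_simple_game_two_classes_bound_general (n : ℕ)
    (χ : Finset (Fin n) → Bool) (hχ : SimpleGame χ)
    (hcomplete : ∀ i j : Fin n, Desirable χ i j ∨ Desirable χ j i)
    (hatmosttwo : ∀ i j k : Fin n,
      EquivVoters χ i j ∨ EquivVoters χ j k ∨ EquivVoters χ i k) :
    mu χ ≤ Real.sqrt n + 1 ∧ RoughlyWeighted χ (Real.sqrt n + 1) := by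
  have hRW : RoughlyWeighted χ (Real.sqrt n + 1) :=
    hχ.roughlyWeighted_of_top_bottom (topClass χ) (fun _ hi => mem_topClass.1 hi)
      (fun _ hx => desirable_of_notMem_topClass hcomplete hatmosttwo hx)
  exact ⟨mu_le_of_roughlyWeighted (by linarith [Real.sqrt_nonneg n]) hRW, hRW⟩

/-- a complete simple game on `n` voters with exactly two
equivalence classes of voters has critical threshold value at most `√n + 1`. -/
theorem complete_simple_game_two_classes_bound (n : ℕ)
    (χ : Finset (Fin n) → Bool) (hχ : SimpleGame χ)
    (hcomplete : ∀ i j : Fin n, Desirable χ i j ∨ Desirable χ j i)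
    (htwo : ∃ i j : Fin n, ¬ EquivVoters χ i j)
    (hatmosttwo : ∀ i j k : Fin n,
      EquivVoters χ i j ∨ EquivVoters χ j k ∨ EquivVoters χ i k) :
    mu χ ≤ Real.sqrt n + 1 ∧ RoughlyWeighted χ (Real.sqrt n + 1) :=
  complete_simple_game_two_classes_bound_general n χ hχ hcomplete hatmosttwo
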